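/- arXiv:1302.6856 — 5 statements merged into one kernel-verified Lean document; each statement's English description precedes it below -/
import Mathlib

section
/- Let G be a group with elements x, y satisfying xyx = yxy and x^r = y^(r-1) for some integer r ≥ 2. Then x = 1 and y = 1, i.e., G generated by x and y is trivial. -/
theorem stmt_0 {G : Type*} [Group G] (x y : G) (r : ℕ) (hr : 2 ≤ r)
    (h1 : x * y * x = y * x * y) (h2 : x ^ r = y ^ (r - 1)) :
    x = 1 ∧ y = 1 := by
  have hc : (x * y) * x * (x * y)⁻¹ = y := by
    have : (x * y) * x * (x * y)⁻¹ = (x * y * x) * y⁻¹ * x⁻¹ := by group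
    rw [this, h1]; group
  have hpow : (x * y) * x ^ (r - 1) * (x * y)⁻¹ = y ^ (r - 1) := by
    rw [← conj_pow, hc]
  have hcomx : Commute (x * y) (x ^ r) :=
    (Commute.self_pow x r).mul_left (by rw [h2]; exact Commute.self_pow y (r-1))
  have hx1 : x ^ r = x ^ (r - 1) := by
    have h3 : (x * y)⁻¹ * (x ^ r) * (x * y) = x ^ (r - 1) := by
      rw [h2, ← hpow]; group
    calc x ^ r = (x * y)⁻¹ * ((x * y) * (x ^ r)) := by group
      _ = (x * y)⁻¹ * ((x ^ r) * (x * y)) := by rw [hcomx.eq]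
      _ = (x * y)⁻¹ * (x ^ r) * (x * y) := by group
      _ = x ^ (r - 1) := h3
  have hx : x = 1 := by
    have h4 : x ^ (r - 1) * x = x ^ (r - 1) * 1 := by
      rw [← pow_succ, mul_one]
      have : r - 1 + 1 = r := by omega
      rw [this, hx1]
    exact mul_left_cancel h4
  refine ⟨hx, ?_⟩
  simp only [hx, one_mul, mul_one] at h1
  exact mul_left_cancel (h1.symm.trans (mul_one y).symm)
end

section
/- Let G be a group with elements x, y satisfying x*y*x = y*x*y and x^r = y^(r-1) for r ≥ 1. Then y^r = x^r. -/
theorem stmt_3 {G : Type*} [Group G] (x y : G) (r : ℕ) (hr : 1 ≤ r)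
    (h1 : x * y * x = y * x * y) (h2 : x ^ r = y ^ (r - 1)) :
    y ^ r = x ^ r := by
  have hcx : (x * y * x) * x * (x * y * x)⁻¹ = y := by
    nth_rewrite 1 [h1]; group
  have hcy : (x * y * x) * y * (x * y * x)⁻¹ = x := by
    nth_rewrite 2 [h1]; group
  have h3 : y ^ r = x ^ (r - 1) := by
    calc y ^ r = ((x * y * x) * x * (x * y * x)⁻¹) ^ r := by rw [hcx]
    _ = (x * y * x) * x ^ r * (x * y * x)⁻¹ := by rw [conj_pow]
    _ = (x * y * x) * y ^ (r - 1) * (x * y * x)⁻¹ := by rw [h2]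
    _ = ((x * y * x) * y * (x * y * x)⁻¹) ^ (r - 1) := by rw [conj_pow]
    _ = x ^ (r - 1) := by rw [hcy]
  have hrr : r - 1 + 1 = r := by omega
  have e1 : y ^ (r - 1) * y = x ^ (r - 1) := by
    rw [← pow_succ, hrr, h3]
  have e2 : x ^ (r - 1) * x = y ^ (r - 1) := by
    rw [← pow_succ, hrr, h2]
  have e3 : x ^ (r - 1) * (x * y) = x ^ (r - 1) * 1 := by
    rw [mul_one, ← mul_assoc, e2, e1]
  have hxy : x * y = 1 := mul_left_cancel e3
  have hy : y = x⁻¹ := by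
    have : x⁻¹ * (x * y) = x⁻¹ * 1 := by rw [hxy]
    rwa [← mul_assoc, inv_mul_cancel, one_mul, mul_one] at this
  have hxinv : x = x⁻¹ := by
    have h := h1
    rw [hy] at h
    calc x = x * x⁻¹ * x := by group
    _ = x⁻¹ * x * x⁻¹ := h
    _ = x⁻¹ := by group
  have hsq : x ^ 2 = 1 := by
    rw [pow_two]; nth_rewrite 1 [hxinv]; group
  have hpow : x ^ (r + (r - 1)) = 1 := by
    rw [pow_add, h2, hy, inv_pow]; group
  have hx1 : x = 1 := by
    have key : x ^ (r + (r - 1)) = (x ^ 2) ^ (r - 1) * x := by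
      rw [← pow_mul, ← pow_succ]; congr 1; omega
    rw [hpow, hsq, one_pow, one_mul] at key
    exact key.symm
  rw [hy, hx1]; group
end

section
/- The presented group ⟨x, y | xyx = yxy, x^3 = y^2⟩ is trivial. -/
theorem stmt_5 :
    Subsingleton (PresentedGroup
      ({(FreeGroup.of 0 * FreeGroup.of 1 * FreeGroup.of 0) *
          (FreeGroup.of 1 * FreeGroup.of 0 * FreeGroup.of 1)⁻¹,
        FreeGroup.of 0 ^ 3 * (FreeGroup.of 1 ^ 2)⁻¹} : Set (FreeGroup (Fin 2)))) := by
  set rels : Set (FreeGroup (Fin 2)) :=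
    {(FreeGroup.of 0 * FreeGroup.of 1 * FreeGroup.of 0) *
        (FreeGroup.of 1 * FreeGroup.of 0 * FreeGroup.of 1)⁻¹,
      FreeGroup.of 0 ^ 3 * (FreeGroup.of 1 ^ 2)⁻¹} with hrels
  set x : PresentedGroup rels := PresentedGroup.of 0 with hx
  set y : PresentedGroup rels := PresentedGroup.of 1 with hy
  have hmk : ∀ r ∈ rels, PresentedGroup.mk rels r = 1 := fun r hr =>
    (QuotientGroup.eq_one_iff r).mpr (Subgroup.subset_normalClosure hr)
  have hB' := hmk _ (Set.mem_insert _ _)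
  have hR' := hmk _ (Set.mem_insert_of_mem _ rfl)
  rw [map_mul, map_mul, map_mul, map_inv, map_mul, map_mul] at hB'
  rw [map_mul, map_inv, map_pow, map_pow] at hR'
  have hB : x * y * x = y * x * y := by
    have := mul_eq_one_iff_eq_inv.mp hB'
    rwa [inv_inv] at this
  have hR : x ^ 3 = y ^ 2 := by
    have := mul_eq_one_iff_eq_inv.mp hR'
    rwa [inv_inv] at this
  -- derive x = 1, y = 1
  have hR2 : x * x * x = y * y := by
    calc x * x * x = x ^ 3 := by rw [pow_succ, pow_two]
    _ = y ^ 2 := hR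
    _ = y * y := sq y
  have hconj : x * y * x * y⁻¹ * x⁻¹ = y := by rw [hB]; group
  have hy2 : y * y = x * y * x * x * y⁻¹ * x⁻¹ := by
    calc y * y = (x * y * x * y⁻¹ * x⁻¹) * (x * y * x * y⁻¹ * x⁻¹) := by rw [hconj]
    _ = x * y * x * x * y⁻¹ * x⁻¹ := by group
  have h1 : x * x * x = y * (x * x) * y⁻¹ := by
    have h := hR2.trans hy2
    calc x * x * x = x⁻¹ * (x * x * x) * x := by group
    _ = x⁻¹ * (x * y * x * x * y⁻¹ * x⁻¹) * x := by rw [h]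
    _ = y * (x * x) * y⁻¹ := by group
  have h2 : x * x = y * y := by
    calc x * x = y⁻¹ * (y * (x * x) * y⁻¹) * y := by group
    _ = y⁻¹ * (x * x * x) * y := by rw [← h1]
    _ = y⁻¹ * (y * y) * y := by rw [hR2]
    _ = y * y := by group
  have hx1 : x = 1 := by
    calc x = (x * x * x) * (x * x)⁻¹ := by group
    _ = (y * y) * (y * y)⁻¹ := by rw [hR2, h2]
    _ = 1 := by group
  have hy1 : y = 1 := by
    have h4 : y = y * y := by
      have := hB
      rw [hx1] at this
      simpa using this.symm
    calc y = (y * y) * y⁻¹ := by group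
    _ = y * y⁻¹ := by rw [← h4]
    _ = 1 := by group
  refine ⟨fun a b => ?_⟩
  have key : ∀ g : PresentedGroup rels, g = 1 := fun g => by
    have := PresentedGroup.generated_by rels ⊥ (fun j => ?_) g
    · simpa using this
    · fin_cases j
      · simpa using hx1
      · simpa using hy1
  rw [key a, key b]
end

section
/- For every integer r ≥ 2, the presented group ⟨x, y | xyx = yxy, x^r = y^(r-1)⟩ is trivial. -/
/-!
Write `g, h` for the images of the generators, `r = n + 1` and `c = g * h`. The braid relation
says that `c` conjugates `g` to `h`. The element `g ^ (n + 1) = h ^ n` commutes with both `g` and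
`h`, so it is fixed by conjugation by `c`; on the other hand that conjugation sends
`g ^ (n + 1) = g ^ n * g` to `h ^ n * h = g ^ (n + 1) * h`. Hence `h = 1`, and then the braid
relation forces `g = 1`.
-/

section Braid

variable {G : Type*} [Group G] {g h : G}

theorem conj_eq_of_braid (hb : g * h * g = h * g * h) : (g * h) * g * (g * h)⁻¹ = h := by
  rw [hb]
  group

theorem eq_one_of_braid_of_pow_succ_eq_pow (hb : g * h * g = h * g * h) {n : ℕ}
    (hp : g ^ (n + 1) = h ^ n) : g = 1 ∧ h = 1 := by
  have hcomm : Commute (g * h) (g ^ (n + 1)) :=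
    (Commute.self_pow g (n + 1)).mul_left (hp ▸ Commute.self_pow h n)
  have hh : h = 1 := by
    have : g ^ (n + 1) = g ^ (n + 1) * h :=
      calc g ^ (n + 1) = (g * h) * g ^ (n + 1) * (g * h)⁻¹ := by
            rw [hcomm.eq, mul_inv_cancel_right]
        _ = (g * h) * g ^ n * (g * h)⁻¹ * ((g * h) * g * (g * h)⁻¹) := by group
        _ = g ^ (n + 1) * h := by rw [← conj_pow, conj_eq_of_braid hb, hp]
    exact left_eq_mul.mp this
  subst hh
  simpa using hb

end Braid

namespace PresentedGroup

variable {α : Type*} {rels : Set (FreeGroup α)}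

theorem subsingleton_of_of_eq_one (h : ∀ a, (of a : PresentedGroup rels) = 1) :
    Subsingleton (PresentedGroup rels) :=
  subsingleton_of_forall_eq 1 fun x =>
    Subgroup.mem_bot.mp (generated_by rels ⊥ (fun a => Subgroup.mem_bot.mpr (h a)) x)

theorem of_eq_one_of_braid_mem_of_pow_succ_mem {x y : α} {n : ℕ}
    (hb : FreeGroup.of x * FreeGroup.of y * FreeGroup.of x *
      (FreeGroup.of y * FreeGroup.of x * FreeGroup.of y)⁻¹ ∈ rels)
    (hp : FreeGroup.of x ^ (n + 1) * (FreeGroup.of y ^ n)⁻¹ ∈ rels) :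
    (of x : PresentedGroup rels) = 1 ∧ (of y : PresentedGroup rels) = 1 := by
  have hb' := mk_eq_mk_of_mul_inv_mem hb
  have hp' := mk_eq_mk_of_mul_inv_mem hp
  simp only [map_mul, map_pow] at hb' hp'
  exact eq_one_of_braid_of_pow_succ_eq_pow hb' hp'

end PresentedGroup

theorem stmt_6 (r : ℕ) (hr : 2 ≤ r) :
    Subsingleton (PresentedGroup
      ({(FreeGroup.of 0 * FreeGroup.of 1 * FreeGroup.of 0) *
          (FreeGroup.of 1 * FreeGroup.of 0 * FreeGroup.of 1)⁻¹,
        FreeGroup.of 0 ^ r * (FreeGroup.of 1 ^ (r - 1))⁻¹} : Set (FreeGroup (Fin 2)))) := by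
  obtain ⟨n, rfl⟩ : ∃ n, r = n + 1 := ⟨r - 1, by omega⟩
  refine PresentedGroup.subsingleton_of_of_eq_one (Fin.forall_fin_two.mpr ?_)
  exact PresentedGroup.of_eq_one_of_braid_mem_of_pow_succ_mem
    (Set.mem_insert _ _) (Set.mem_insert_of_mem _ rfl)
end

section
/- If a finitely presented group G = ⟨x, y | xyx = yxy, x^r = y^(r-1)⟩ with r ≥ 2 admits a surjective homomorphism onto a group H, then H is trivial. -/
theorem stmt_19 {G H : Type*} [Group G] [Group H] (x y : G) (r : ℕ) (hr : 2 ≤ r)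
    (hgen : Subgroup.closure ({x, y} : Set G) = ⊤)
    (h1 : x * y * x = y * x * y) (h2 : x ^ r = y ^ (r - 1))
    (φ : G →* H) (hφ : Function.Surjective φ) :
    Subsingleton H := by
  have hy : (x * y) * x * (x * y)⁻¹ = y := by
    rw [h1]; group
  have hcx : x ^ r * x = x * x ^ r := by
    rw [← pow_succ, ← pow_succ']
  have hcy : x ^ r * y = y * x ^ r := by
    rw [h2, ← pow_succ, ← pow_succ']
  have hct : x ^ r * (x * y) = (x * y) * x ^ r := by
    rw [← mul_assoc, hcx, mul_assoc, hcy, ← mul_assoc]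
  have hyr : y ^ r = x ^ r := by
    calc y ^ r = ((x * y) * x * (x * y)⁻¹) ^ r := by rw [hy]
    _ = (x * y) * x ^ r * (x * y)⁻¹ := conj_pow
    _ = x ^ r := by rw [← hct, mul_assoc, mul_inv_cancel, mul_one]
  have hy1 : y = 1 := by
    have h3 : y ^ (r - 1) * y = y ^ (r - 1) * 1 := by
      rw [← pow_succ, mul_one, Nat.sub_add_cancel (by omega), hyr, h2]
    exact mul_left_cancel h3
  have hx1 : x = 1 := by
    have h4 : x * x = x * 1 := by simpa [hy1] using h1
    exact mul_left_cancel h4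
  have hG : ∀ g : G, g = 1 := by
    intro g
    have hm : g ∈ Subgroup.closure ({x, y} : Set G) := hgen ▸ Subgroup.mem_top g
    rw [hx1, hy1] at hm
    simp only [Set.pair_eq_singleton, Subgroup.closure_singleton_one,
      Subgroup.mem_bot] at hm
    exact hm
  constructor
  intro a b
  obtain ⟨ga, rfl⟩ := hφ a
  obtain ⟨gb, rfl⟩ := hφ b
  rw [hG ga, hG gb]
end
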